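/- Let F be a fullerene graph, H the vertex set of two disjoint hexagonal faces h₁, h₂, and A a vertex set of F−H such that every component of F−H−A is factor-critical and the number of such components exceeds |A|. Then, writing s(D) = Σ_{F*∈D} (|∇(F*)|−3)/2 over the components D of F−H−A, the inequality |E(A,H)| + |E(A,A)| + s(D) ≤ (1/2)|∇(H)| − 3 holds. -/

import Mathlib

/-!
Write `K = H ∪ A` and let `c` be the number of components of `F - K`. Counting edge ends
in the cubic graph `F` gives `|∇(K)| = |∇(H)| + 3|A| - 2|E(A,H)| - 2|E(A,A)|`, and since every
edge leaving a component of `F - K` ends in `K`, also `|∇(K)| = Σ |∇(F*)| = 3c + 2s(D)`.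
Factor-critical graphs have odd order, so `c ≡ |V ∖ K| ≡ |A| (mod 2)` because `|V|` is even and
`|H| = 12`; together with `c > |A|` this forces `c ≥ |A| + 2`, and substituting gives the bound.
-/

open SimpleGraph

/-- A graph is factor-critical if deleting any vertex leaves a graph with a perfect matching. -/
def FactorCritical {V : Type} (G : SimpleGraph V) : Prop :=
  ∀ v : V, ∃ M : G.Subgraph, M.IsMatching ∧ M.verts = {v}ᶜ

/-- The set of edges of `G` with exactly one endpoint in `X` (the edge cut `∇(X)`). -/
def edgeCut {V : Type} (G : SimpleGraph V) (X : Set V) : Set (Sym2 V) :=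
  {e | ∃ a b, G.Adj a b ∧ e = s(a,b) ∧ a ∈ X ∧ b ∉ X}

/-- The set of edges of `G` with one endpoint in `X` and the other in `Y`. -/
def edgesBetween {V : Type} (G : SimpleGraph V) (X Y : Set V) : Set (Sym2 V) :=
  {e | ∃ a b, G.Adj a b ∧ e = s(a,b) ∧ a ∈ X ∧ b ∈ Y}

/-- The set of edges of `G` with both endpoints in `X`. -/
def interiorEdges {V : Type} (G : SimpleGraph V) (X : Set V) : Set (Sym2 V) :=
  {e | e ∈ G.edgeSet ∧ ∀ v ∈ e, v ∈ X}

/-- `C` is a cyclic edge-cut of `G`: after deleting `C` there are cycles in two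
different components. -/
def IsCyclicEdgeCut {V : Type} (G : SimpleGraph V) (C : Set (Sym2 V)) : Prop :=
  C ⊆ G.edgeSet ∧ ∃ (u v : V) (p : (G.deleteEdges C).Walk u u) (q : (G.deleteEdges C).Walk v v),
    p.IsCycle ∧ q.IsCycle ∧ ¬ (G.deleteEdges C).Reachable u v

/-- `G` is cyclically `k`-edge-connected: every cyclic edge-cut has at least `k` edges. -/
def CyclicallyEdgeConnected {V : Type} (G : SimpleGraph V) (k : ℕ) : Prop :=
  ∀ C : Set (Sym2 V), IsCyclicEdgeCut G C → k ≤ C.ncard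

/-- A graph is 2-connected if it has at least 3 vertices and deleting any vertex
leaves it connected. -/
def TwoConnected {W : Type} (G : SimpleGraph W) : Prop :=
  3 ≤ Nat.card W ∧ ∀ v : W, ((⊤ : G.Subgraph).deleteVerts {v}).coe.Connected

/-- A combinatorial plane structure on a graph: an abstract set of faces, each face
being a cycle of the graph, with every edge lying on exactly two faces. -/
structure PlaneFaceStruct (V : Type) (G : SimpleGraph V) where
  Face : Type
  faceFinite : Finite Face
  boundary : Face → Set (Sym2 V)
  boundary_sub : ∀ f, boundary f ⊆ G.edgeSet
  boundary_cycle : ∀ f : Face, ∃ (v : V) (w : G.Walk v v), w.IsCycle ∧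
    ∀ e, e ∈ boundary f ↔ e ∈ w.edges
  edge_faces : ∀ e ∈ G.edgeSet, {f : Face | e ∈ boundary f}.ncard = 2

/-- A fullerene graph: a 3-connected cubic plane graph whose faces are pentagons and
hexagons, with exactly 12 pentagonal faces. -/
structure Fullerene (V : Type) [Fintype V] where
  G : SimpleGraph V
  threeConnected : ∀ S : Set V, S.ncard ≤ 2 → ((⊤ : G.Subgraph).deleteVerts S).coe.Connected
  cubic : ∀ v : V, Nat.card {w // G.Adj v w} = 3
  faces : PlaneFaceStruct V G
  face_size : ∀ f, (faces.boundary f).ncard = 5 ∨ (faces.boundary f).ncard = 6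
  pentagons : {f : faces.Face | (faces.boundary f).ncard = 5}.ncard = 12

/-- The vertices on the boundary of a face. -/
def Fullerene.faceVerts {V : Type} [Fintype V] (Fu : Fullerene V) (f : Fu.faces.Face) : Set V :=
  {v | ∃ e ∈ Fu.faces.boundary f, v ∈ e}

/-- `g` is a neighboring face of `f`: it is distinct from `f` and shares an edge with it. -/
def Fullerene.NeighboringFace {V : Type} [Fintype V] (Fu : Fullerene V)
    (g f : Fu.faces.Face) : Prop :=
  g ≠ f ∧ (Fu.faces.boundary g ∩ Fu.faces.boundary f).Nonempty

section EdgeSets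

variable {V : Type} (G : SimpleGraph V)

lemma edgesBetween_comm (X Y : Set V) : edgesBetween G X Y = edgesBetween G Y X := by
  ext e
  constructor <;> rintro ⟨a, b, hab, rfl, ha, hb⟩ <;>
    exact ⟨b, a, hab.symm, Sym2.eq_swap, hb, ha⟩

lemma edgesBetween_iUnion_left {ι : Type*} (X : ι → Set V) (Y : Set V) :
    edgesBetween G (⋃ i, X i) Y = ⋃ i, edgesBetween G (X i) Y := by
  ext e
  simp only [edgesBetween, Set.mem_iUnion, Set.mem_ofPred_eq]
  constructor
  · rintro ⟨a, b, hab, rfl, ⟨i, ha⟩, hb⟩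
    exact ⟨i, a, b, hab, rfl, ha, hb⟩
  · rintro ⟨i, a, b, hab, rfl, ha, hb⟩
    exact ⟨a, b, hab, rfl, ⟨i, ha⟩, hb⟩

lemma edgesBetween_union_left (X X' Y : Set V) :
    edgesBetween G (X ∪ X') Y = edgesBetween G X Y ∪ edgesBetween G X' Y := by
  rw [Set.union_eq_iUnion, edgesBetween_iUnion_left, Set.union_eq_iUnion]
  congr! with b
  cases b <;> rfl

lemma edgesBetween_union_right (X Y Y' : Set V) :
    edgesBetween G X (Y ∪ Y') = edgesBetween G X Y ∪ edgesBetween G X Y' := by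
  rw [edgesBetween_comm, edgesBetween_union_left, edgesBetween_comm G Y, edgesBetween_comm G Y']

variable {G} in
lemma disjoint_edgesBetween {X Y X' Y' : Set V}
    (h : Disjoint X X' ∨ Disjoint Y Y') (h' : Disjoint X Y' ∨ Disjoint Y X') :
    Disjoint (edgesBetween G X Y) (edgesBetween G X' Y') := by
  rw [Set.disjoint_left]
  rintro e ⟨a, b, -, rfl, ha, hb⟩ ⟨a', b', -, he, ha', hb'⟩
  rcases Sym2.eq_iff.mp he with ⟨rfl, rfl⟩ | ⟨rfl, rfl⟩
  · rcases h with h | h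
    exacts [h.notMem_of_mem_left ha ha', h.notMem_of_mem_left hb hb']
  · rcases h' with h' | h'
    exacts [h'.notMem_of_mem_left ha hb', h'.notMem_of_mem_left hb ha']

lemma edgeCut_eq_edgesBetween_compl (X : Set V) : edgeCut G X = edgesBetween G X Xᶜ := rfl

/-- The edges between `X` and `Y` leave both `X` and `Y` but not their union. -/
lemma ncard_edgeCut_union_add [Finite V] {X Y : Set V} (hXY : Disjoint X Y) :
    (edgeCut G (X ∪ Y)).ncard + 2 * (edgesBetween G X Y).ncard =
      (edgeCut G X).ncard + (edgeCut G Y).ncard := by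
  have hXZ : Disjoint X (X ∪ Y)ᶜ := disjoint_compl_right.mono_left Set.subset_union_left
  have hYZ : Disjoint Y (X ∪ Y)ᶜ := disjoint_compl_right.mono_left Set.subset_union_right
  have hXc : Xᶜ = Y ∪ (X ∪ Y)ᶜ := by
    ext v; have := hXY.notMem_of_mem_right (a := v); simp; tauto
  have hYc : Yᶜ = X ∪ (X ∪ Y)ᶜ := by
    ext v; have := hXY.notMem_of_mem_left (a := v); simp; tauto
  simp only [edgeCut_eq_edgesBetween_compl, hXc, hYc, edgesBetween_union_left,
    edgesBetween_union_right]
  rw [Set.ncard_union_eq (disjoint_edgesBetween (.inl hXY) (.inl hXZ)),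
    Set.ncard_union_eq (disjoint_edgesBetween (.inr hYZ) (.inl hXZ)),
    Set.ncard_union_eq (disjoint_edgesBetween (.inr hXZ) (.inl hYZ)),
    edgesBetween_comm G Y X]
  ring

end EdgeSets

section DegreeSum

open Finset

variable {V : Type} [Fintype V] (G : SimpleGraph V) [DecidableRel G.Adj]

lemma card_darts_fst_mem (X : Set V) [DecidablePred (· ∈ X)] :
    #{d : G.Dart | d.fst ∈ X} = ∑ v ∈ X.toFinset, G.degree v := by
  classical
  rw [card_eq_sum_card_fiberwise (f := fun d : G.Dart => d.fst) (t := X.toFinset)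
    fun d hd => by simpa using hd]
  refine sum_congr rfl fun v hv => ?_
  rw [← dart_fst_fiber_card_eq_degree, filter_filter]
  congr 1
  ext d
  simp only [mem_filter, mem_univ, true_and, and_iff_right_iff_imp]
  rintro rfl
  simpa using hv

lemma card_darts_mem_mem (X : Set V) [DecidablePred (· ∈ X)] :
    #{d : G.Dart | d.fst ∈ X ∧ d.snd ∈ X} = 2 * (edgesBetween G X X).ncard := by
  classical
  rw [Set.ncard_eq_toFinset_card', card_eq_sum_card_fiberwise (f := fun d : G.Dart => d.edge)
    (t := (edgesBetween G X X).toFinset), sum_const_nat (m := 2), mul_comm]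
  · intro e he
    obtain ⟨a, b, hab, rfl, ha, hb⟩ := Set.mem_toFinset.mp he
    rw [← dart_edge_fiber_card G s(a, b) hab, filter_filter]
    congr 1
    ext d
    simp only [mem_filter, mem_univ, true_and, and_iff_right_iff_imp]
    intro hd
    rcases Sym2.eq_iff.mp hd with ⟨h₁, h₂⟩ | ⟨h₁, h₂⟩ <;> simp_all
  · intro d hd
    simp only [coe_filter, mem_univ, true_and, Set.mem_ofPred_eq] at hd
    simpa using ⟨d.fst, d.snd, d.adj, rfl, hd⟩

lemma card_darts_mem_notMem (X : Set V) [DecidablePred (· ∈ X)] :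
    #{d : G.Dart | d.fst ∈ X ∧ d.snd ∉ X} = (edgeCut G X).ncard := by
  classical
  have hinj : Set.InjOn (fun d : G.Dart => d.edge)
      ↑({d : G.Dart | d.fst ∈ X ∧ d.snd ∉ X} : Finset _) := by
    intro d hd d' hd' h
    simp only [coe_filter, mem_univ, true_and, Set.mem_ofPred_eq] at hd hd'
    rcases (dart_edge_eq_iff d d').mp h with h | rfl
    · exact h
    · exact absurd hd'.1 hd.2
  rw [← card_image_of_injOn hinj, ← Set.ncard_coe_finset]
  congr 1
  ext e
  simp only [coe_image, coe_filter, mem_univ, true_and, Set.mem_image, Set.mem_ofPred_eq]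
  constructor
  · rintro ⟨d, hd, rfl⟩
    exact ⟨d.fst, d.snd, d.adj, rfl, hd⟩
  · rintro ⟨a, b, hab, rfl, ha, hb⟩
    exact ⟨⟨(a, b), hab⟩, ⟨ha, hb⟩, rfl⟩

theorem sum_degree_eq_two_mul_add (X : Set V) [DecidablePred (· ∈ X)] :
    ∑ v ∈ X.toFinset, G.degree v = 2 * (edgesBetween G X X).ncard + (edgeCut G X).ncard := by
  rw [← card_darts_fst_mem, ← card_darts_mem_mem, ← card_darts_mem_notMem,
    ← card_filter_add_card_filter_not (fun d : G.Dart => d.snd ∈ X), filter_filter,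
    filter_filter]

variable {G} in
theorem SimpleGraph.IsRegularOfDegree.mul_ncard_eq {k : ℕ} (h : G.IsRegularOfDegree k)
    (X : Set V) : k * X.ncard = 2 * (edgesBetween G X X).ncard + (edgeCut G X).ncard := by
  classical
  rw [← sum_degree_eq_two_mul_add, sum_congr rfl fun v _ => h.degree_eq v, sum_const,
    smul_eq_mul, mul_comm, Set.ncard_eq_toFinset_card']

variable {G} in
/-- The `k |X|` edge ends at `X` are the two ends of each edge inside `X`, one end of each edge of
`E(X,Y)`, and one end of each edge of `∇(Y ∪ X)` leaving from `X`. -/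
theorem SimpleGraph.IsRegularOfDegree.ncard_edgeCut_union_add {k : ℕ} (h : G.IsRegularOfDegree k)
    {X Y : Set V} (hXY : Disjoint X Y) :
    (edgeCut G (Y ∪ X)).ncard + 2 * (edgesBetween G X Y).ncard +
      2 * (edgesBetween G X X).ncard = (edgeCut G Y).ncard + k * X.ncard := by
  have hunion := _root_.ncard_edgeCut_union_add G hXY.symm
  have hdeg := h.mul_ncard_eq X
  rw [edgesBetween_comm] at hunion
  omega

variable {G} in
theorem SimpleGraph.IsRegularOfDegree.even_card {k : ℕ} (h : G.IsRegularOfDegree k) (hk : Odd k) :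
    Even (Fintype.card V) := by
  have hsum := G.sum_degrees_eq_twice_card_edges
  rw [sum_congr rfl fun v _ => h.degree_eq v, sum_const, card_univ, smul_eq_mul] at hsum
  exact (Nat.even_mul.mp ⟨_, hsum.trans (two_mul _)⟩).resolve_right
    (Nat.not_even_iff_odd.mpr hk)

end DegreeSum

theorem FactorCritical.odd_card {W : Type} [Finite W] [Nonempty W] {G : SimpleGraph W}
    (h : FactorCritical G) : Odd (Nat.card W) := by
  classical
  have := Fintype.ofFinite W
  obtain ⟨M, hM, hverts⟩ := h (Classical.arbitrary W)
  have heven := hM.even_card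
  simp only [hverts, Set.toFinset_compl, Set.toFinset_singleton, Finset.card_compl,
    Finset.card_singleton] at heven
  have hpos : 0 < Fintype.card W := Fintype.card_pos
  rw [Nat.card_eq_fintype_card]
  obtain ⟨k, hk⟩ := heven
  exact ⟨k, by omega⟩

section Components

open Function

variable {V : Type} (G : SimpleGraph V) (K : Set V)

lemma iUnion_image_val_supp :
    ⋃ C : (G.induce Kᶜ).ConnectedComponent, Subtype.val '' C.supp = Kᶜ := by
  rw [← Set.image_iUnion, iUnion_connectedComponentSupp, Set.image_univ, Subtype.range_coe]

lemma pairwise_disjoint_image_val_supp :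
    Pairwise (Disjoint on fun C : (G.induce Kᶜ).ConnectedComponent => Subtype.val '' C.supp) :=
  fun _ _ h => (Set.disjoint_image_iff Subtype.val_injective).mpr
    (pairwise_disjoint_supp_connectedComponent _ h)

lemma edgeCut_image_val_supp (C : (G.induce Kᶜ).ConnectedComponent) :
    edgeCut G (Subtype.val '' C.supp) = edgesBetween G (Subtype.val '' C.supp) K := by
  ext e
  constructor
  · rintro ⟨a, b, hab, rfl, ⟨a', ha', rfl⟩, hb⟩
    refine ⟨a', b, hab, rfl, ⟨a', ha', rfl⟩, ?_⟩
    by_contra hbK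
    have hadj : (G.induce Kᶜ).Adj a' ⟨b, hbK⟩ := hab
    exact hb ⟨⟨b, hbK⟩,
      (ConnectedComponent.connectedComponentMk_eq_of_adj hadj.symm).trans ha', rfl⟩
  · rintro ⟨a, b, hab, rfl, ⟨a', ha', rfl⟩, hb⟩
    exact ⟨a', b, hab, rfl, ⟨a', ha', rfl⟩, fun ⟨b', _, hb'⟩ => hb'.symm ▸ b'.2 <| hb⟩

theorem finsum_ncard_edgeCut_image_val_supp [Finite V] :
    ∑ᶠ C : (G.induce Kᶜ).ConnectedComponent, (edgeCut G (Subtype.val '' C.supp)).ncard =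
      (edgeCut G K).ncard := by
  have hdisj : Pairwise (Disjoint on fun C : (G.induce Kᶜ).ConnectedComponent =>
      edgesBetween G (Subtype.val '' C.supp) K) := fun _ _ h =>
    disjoint_edgesBetween (.inl (pairwise_disjoint_image_val_supp G K h))
      (.inl (disjoint_compl_left.mono_left (Subtype.coe_image_subset _ _)))
  simp_rw [edgeCut_image_val_supp]
  rw [← Set.ncard_iUnion_of_finite (fun _ => Set.toFinite _) hdisj, ← edgesBetween_iUnion_left,
    iUnion_image_val_supp, edgeCut_eq_edgesBetween_compl, edgesBetween_comm]

theorem odd_card_connectedComponent_iff_of_factorCritical [Finite V]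
    (h : ∀ C : G.ConnectedComponent, FactorCritical (G.induce C.supp)) :
    Odd (Nat.card G.ConnectedComponent) ↔ Odd (Nat.card V) := by
  have hodd : G.oddComponents = Set.univ := Set.eq_univ_of_forall fun C => by
    have := C.nonempty_supp.to_subtype
    exact (Nat.card_coe_set_eq C.supp ▸ (h C).odd_card : Odd C.supp.ncard)
  rw [← G.odd_ncard_oddComponents, hodd, Set.ncard_univ]

end Components

theorem List.Nodup.ncard_setOf_mem {α : Type*} {l : List α} (h : l.Nodup) :
    {x | x ∈ l}.ncard = l.length := by
  classical
  rw [show {x | x ∈ l} = (l.toFinset : Set α) by ext; simp, Set.ncard_coe_finset,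
    List.toFinset_card_of_nodup h]

namespace SimpleGraph.Walk

variable {V : Type} {G : SimpleGraph V} {u v : V}

theorem IsTrail.ncard_edges {w : G.Walk u v} (hw : w.IsTrail) : {e | e ∈ w.edges}.ncard = w.length :=
  hw.edges_nodup.ncard_setOf_mem.trans w.length_edges

theorem IsCycle.ncard_support {w : G.Walk u u} (hw : w.IsCycle) : {x | x ∈ w.support}.ncard = w.length := by
  have : {x | x ∈ w.support} = {x | x ∈ w.support.tail} := by
    ext x
    simp only [Set.mem_ofPred_eq]
    refine ⟨fun hx => ?_, List.mem_of_mem_tail⟩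
    rw [← w.cons_tail_support, List.mem_cons] at hx
    exact hx.elim (fun h => h ▸ end_mem_tail_support hw.not_nil) id
  rw [this, hw.support_nodup.ncard_setOf_mem, List.length_tail, length_support]
  rfl

end SimpleGraph.Walk

theorem Fullerene.ncard_faceVerts {V : Type} [Fintype V] (Fu : Fullerene V) (f : Fu.faces.Face) :
    (Fu.faceVerts f).ncard = (Fu.faces.boundary f).ncard := by
  obtain ⟨v, w, hw, hbd⟩ := Fu.faces.boundary_cycle f
  have hverts : Fu.faceVerts f = {x | x ∈ w.support} := by
    ext x
    simp only [Fullerene.faceVerts, hbd, Set.mem_ofPred_eq,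
      Walk.mem_support_iff_exists_mem_edges_of_not_nil hw.not_nil]
  have hedges : Fu.faces.boundary f = {e | e ∈ w.edges} := Set.ext hbd
  rw [hverts, hedges, hw.ncard_support, hw.isTrail.ncard_edges]

theorem finsum_cast_sub_div {ι : Type*} [Finite ι] (f : ι → ℕ) (a b : ℚ) :
    ∑ᶠ i, ((f i : ℚ) - a) / b = ((∑ᶠ i, f i : ℕ) - a * Nat.card ι) / b := by
  have := Fintype.ofFinite ι
  rw [finsum_eq_sum_of_fintype, finsum_eq_sum_of_fintype, ← Finset.sum_div,
    Finset.sum_sub_distrib, Finset.sum_const, Finset.card_univ, Nat.card_eq_fintype_card,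
    nsmul_eq_mul, mul_comm, Nat.cast_sum]

theorem Fullerene.isRegularOfDegree_three {V : Type} [Fintype V] (Fu : Fullerene V)
    [DecidableRel Fu.G.Adj] : Fu.G.IsRegularOfDegree 3 := fun v => by
  rw [← card_neighborSet_eq_degree, ← Fu.cubic v, Nat.card_eq_fintype_card]
  rfl

/-- Let `H` be the vertex set of two disjoint hexagons of a fullerene graph and `A` a
vertex set of `F - H` such that every component of `F - H - A` is factor-critical and
there are more components than `|A|`.  Then
`|E(A,H)| + |E(A,A)| + s(D) ≤ |∇(H)|/2 - 3`,
where `s(D) = Σ_{F* ∈ D} (|∇(F*)| - 3)/2` runs over the components of `F - H - A`. -/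
theorem matching_counting_inequality {V : Type} [Fintype V] (Fu : Fullerene V)
    (h₁ h₂ : Fu.faces.Face)
    (hh₁ : (Fu.faces.boundary h₁).ncard = 6) (hh₂ : (Fu.faces.boundary h₂).ncard = 6)
    (hdisj : Disjoint (Fu.faceVerts h₁) (Fu.faceVerts h₂))
    (A : Set V) (hA : Disjoint A (Fu.faceVerts h₁ ∪ Fu.faceVerts h₂))
    (hfc : ∀ C : (Fu.G.induce ((Fu.faceVerts h₁ ∪ Fu.faceVerts h₂) ∪ A)ᶜ).ConnectedComponent,
      FactorCritical ((Fu.G.induce ((Fu.faceVerts h₁ ∪ Fu.faceVerts h₂) ∪ A)ᶜ).induce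
        {v | (Fu.G.induce ((Fu.faceVerts h₁ ∪ Fu.faceVerts h₂) ∪ A)ᶜ).connectedComponentMk v = C}))
    (hmore : A.ncard <
      Nat.card (Fu.G.induce ((Fu.faceVerts h₁ ∪ Fu.faceVerts h₂) ∪ A)ᶜ).ConnectedComponent) :
    ((edgesBetween Fu.G A (Fu.faceVerts h₁ ∪ Fu.faceVerts h₂)).ncard : ℚ) +
      ((edgesBetween Fu.G A A).ncard : ℚ) +
      (∑ᶠ C : (Fu.G.induce ((Fu.faceVerts h₁ ∪ Fu.faceVerts h₂) ∪ A)ᶜ).ConnectedComponent,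
        (((edgeCut Fu.G (Subtype.val ''
          {v | (Fu.G.induce ((Fu.faceVerts h₁ ∪ Fu.faceVerts h₂) ∪ A)ᶜ).connectedComponentMk v
            = C})).ncard : ℚ) - 3) / 2) ≤
    ((edgeCut Fu.G (Fu.faceVerts h₁ ∪ Fu.faceVerts h₂)).ncard : ℚ) / 2 - 3 := by
  classical
  set H := Fu.faceVerts h₁ ∪ Fu.faceVerts h₂
  set D := Fu.G.induce (H ∪ A)ᶜ
  simp only [← ConnectedComponent.mem_supp_iff, Set.ofPred_mem_eq]
  have hreg : Fu.G.IsRegularOfDegree 3 := Fu.isRegularOfDegree_three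
  have hcut := hreg.ncard_edgeCut_union_add hA
  have hcomponents : A.ncard + 2 ≤ Nat.card D.ConnectedComponent := by
    have hparity := odd_card_connectedComponent_iff_of_factorCritical D hfc
    have hV := hreg.even_card (by decide)
    have hH : H.ncard = 12 := by
      rw [Set.ncard_union_eq hdisj, Fu.ncard_faceVerts, Fu.ncard_faceVerts, hh₁, hh₂]
    have hK := Set.ncard_add_ncard_compl (H ∪ A)
    rw [Set.ncard_union_eq hA.symm, hH, Nat.card_eq_fintype_card] at hK
    rw [Nat.card_coe_set_eq, Nat.odd_iff, Nat.odd_iff] at hparity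
    rw [Nat.even_iff] at hV
    omega
  rw [finsum_cast_sub_div, finsum_ncard_edgeCut_image_val_supp]
  have hcut' : ((edgeCut Fu.G (H ∪ A)).ncard : ℚ) + 2 * (edgesBetween Fu.G A H).ncard +
      2 * (edgesBetween Fu.G A A).ncard = (edgeCut Fu.G H).ncard + 3 * A.ncard := by
    exact_mod_cast hcut
  have hcomponents' : (A.ncard : ℚ) + 2 ≤ Nat.card D.ConnectedComponent := by
    exact_mod_cast hcomponents
  linarith
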